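/- Let x : [−δ, δ] → ℝ² be twice continuously differentiable with |x′(t)| = 1 for every t ∈ [−δ, δ], where δ > 0. Then there exist constants C > 0 and ε₁ ∈ (0, δ] such that for every ε ∈ (0, ε₁] and all t, s ∈ [−1, 1] with t ≠ s, the chord |x(εt) − x(εs)| is nonzero and | ln( |x(εt) − x(εs)| / (ε |t − s|) ) | ≤ C ε. Consequently the kernel (1/ε)·ln( |x(εt) − x(εs)| / (ε|t − s|) ) is bounded on [−1,1]² uniformly in ε ∈ (0, ε₁]. -/

import Mathlib

/-!
An arc-length parametrized curve with Lipschitz tangent `x'` satisfies, by the mean value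
inequality, `‖x a - x b‖ ≤ |a - b|` and `‖x a - x b - (a - b) • x' b‖ ≤ K |a - b|²`; since
`‖x' b‖ = 1`, the chord is therefore squeezed between `d - K d²` and `d`, where `d = |a - b|`.
For `a = εt`, `b = εs` the ratio of the chord to `d = ε|t - s| ≤ 2ε` thus lies in
`[1 - 2Kε, 1]`, and its logarithm is `O(ε)`.
-/

open Real Set
open scoped NNReal

theorem Real.abs_log_le_two_mul_of_one_sub_le {r u : ℝ} (hu₀ : 0 ≤ u) (hu : u ≤ 1 / 2)
    (hr₀ : 1 - u ≤ r) (hr₁ : r ≤ 1) : |log r| ≤ 2 * u := by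
  have hr : 0 < r := by linarith
  have hinv : r⁻¹ ≤ 1 + 2 * u := by
    rw [inv_le_iff_one_le_mul₀ hr]
    nlinarith
  rw [abs_of_nonpos (log_nonpos hr.le hr₁)]
  linarith [one_sub_inv_le_log_of_pos hr]

theorem Real.abs_log_div_le_of_sub_mul_sq_le {N d M : ℝ} (hd : 0 < d) (hM : 0 ≤ M)
    (hMd : M * d ≤ 1 / 2) (hup : N ≤ d) (hlo : d - M * d ^ 2 ≤ N) :
    0 < N ∧ |log (N / d)| ≤ 2 * (M * d) := by
  have hlo' : 1 - M * d ≤ N / d := by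
    rw [le_div_iff₀ hd]
    linarith
  refine ⟨?_, abs_log_le_two_mul_of_one_sub_le (by positivity) hMd hlo' ?_⟩
  · have : 0 < N / d := by linarith
    exact (div_pos_iff_of_pos_right hd).1 this
  · rwa [div_le_one hd]

section Chord

variable {E : Type*} [NormedAddCommGroup E] [NormedSpace ℝ E]

theorem Convex.norm_sub_sub_smul_le_of_lipschitzOnWith {f f' : ℝ → E} {s : Set ℝ} {K : ℝ≥0}
    {a b : ℝ} (hs : Convex ℝ s) (hf : ∀ u ∈ s, HasDerivWithinAt f (f' u) s u)
    (hf' : LipschitzOnWith K f' s) (ha : a ∈ s) (hb : b ∈ s) :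
    ‖f a - f b - (a - b) • f' b‖ ≤ K * |a - b| ^ 2 := by
  have hsub : uIcc a b ⊆ s := hs.ordConnected.uIcc_subset ha hb
  have hg : ∀ u ∈ uIcc a b,
      HasDerivWithinAt (fun u ↦ f u - u • f' b) (f' u - f' b) (uIcc a b) u := by
    intro u hu
    simpa using ((hf u (hsub hu)).mono hsub).fun_sub ((hasDerivWithinAt_id u _).smul_const (f' b))
  have hbound : ∀ u ∈ uIcc a b, ‖f' u - f' b‖ ≤ K * |a - b| := by
    intro u hu
    calc ‖f' u - f' b‖ ≤ K * |u - b| := hf'.norm_sub_le (hsub hu) hb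
      _ ≤ K * |a - b| := by
        refine mul_le_mul_of_nonneg_left ?_ K.2
        rw [abs_sub_comm u, abs_sub_comm a]
        exact abs_sub_right_of_mem_uIcc hu
  have hmvt := Convex.norm_image_sub_le_of_norm_hasDerivWithin_le hg hbound (convex_uIcc a b)
    right_mem_uIcc left_mem_uIcc
  calc ‖f a - f b - (a - b) • f' b‖ = ‖(f a - a • f' b) - (f b - b • f' b)‖ := by
        congr 1; module
    _ ≤ K * |a - b| * ‖a - b‖ := hmvt
    _ = K * |a - b| ^ 2 := by rw [Real.norm_eq_abs]; ring

theorem exists_chord_bounds_of_norm_derivWithin_eq_one {x : ℝ → E} {s : Set ℝ}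
    (hs : Convex ℝ s) (hsc : IsCompact s) (hsu : UniqueDiffOn ℝ s) (hx : ContDiffOn ℝ 2 x s)
    (hunit : ∀ t ∈ s, ‖derivWithin x s t‖ = 1) :
    ∃ K : ℝ≥0, ∀ a ∈ s, ∀ b ∈ s,
      ‖x a - x b‖ ≤ |a - b| ∧ |a - b| - K * |a - b| ^ 2 ≤ ‖x a - x b‖ := by
  have hxd : ∀ u ∈ s, HasDerivWithinAt x (derivWithin x s u) s u := fun u hu ↦
    (hx.differentiableOn (by norm_num) u hu).hasDerivWithinAt
  obtain ⟨K, hK⟩ := (hx.derivWithin hsu (m := 1) (by norm_num)).exists_lipschitzOnWith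
    one_ne_zero hs hsc
  refine ⟨K, fun a ha b hb ↦ ⟨?_, ?_⟩⟩
  · simpa [Real.norm_eq_abs] using Convex.norm_image_sub_le_of_norm_hasDerivWithin_le hxd
      (fun u hu ↦ (hunit u hu).le) hs hb ha
  · have htaylor := hs.norm_sub_sub_smul_le_of_lipschitzOnWith hxd hK ha hb
    have hlin : ‖(a - b) • derivWithin x s b‖ = |a - b| := by
      rw [norm_smul, hunit b hb, Real.norm_eq_abs, mul_one]
    have htri := norm_sub_norm_le ((a - b) • derivWithin x s b) (x a - x b)
    rw [hlin, norm_sub_rev ((a - b) • _)] at htri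
    linarith

end Chord

/-- uniform `O(ε)` estimate for the rescaled logarithmic chord kernel of an
arc-length parametrized `C²` curve: for `ε ≤ ε₁` and `t ≠ s` in `[−1, 1]`, the chord
`x(εt) − x(εs)` is nonzero and `| ln( |x(εt) − x(εs)| / (ε|t − s|) ) | ≤ C ε`. -/
theorem stmt7 (δ : ℝ) (hδ : 0 < δ) (x : ℝ → EuclideanSpace ℝ (Fin 2))
    (hx : ContDiffOn ℝ 2 x (Set.Icc (-δ) δ))
    (hunit : ∀ t ∈ Set.Icc (-δ) δ, ‖derivWithin x (Set.Icc (-δ) δ) t‖ = 1) :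
    ∃ C > (0:ℝ), ∃ ε₁ ∈ Set.Ioc 0 δ, ∀ ε ∈ Set.Ioc (0:ℝ) ε₁,
      ∀ t ∈ Set.Icc (-1:ℝ) 1, ∀ s ∈ Set.Icc (-1:ℝ) 1, t ≠ s →
        x (ε * t) ≠ x (ε * s) ∧
        |Real.log (‖x (ε * t) - x (ε * s)‖ / (ε * |t - s|))| ≤ C * ε := by
  obtain ⟨K, hK⟩ := exists_chord_bounds_of_norm_derivWithin_eq_one (convex_Icc _ _)
    isCompact_Icc (uniqueDiffOn_Icc (by linarith)) hx hunit
  set M : ℝ := K + 1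
  have hM : 0 < M := by positivity
  refine ⟨4 * M, by positivity, min δ (1 / (4 * M)), ⟨lt_min hδ (by positivity), min_le_left _ _⟩,
    fun ε ⟨hε, hε₁⟩ t ht s hs hts ↦ ?_⟩
  have hεδ : ε ≤ δ := hε₁.trans (min_le_left _ _)
  have hεM : 4 * M * ε ≤ 1 := by
    have := hε₁.trans (min_le_right _ _)
    rw [le_div_iff₀ (by positivity)] at this
    linarith
  have hmem : ∀ r ∈ Icc (-1 : ℝ) 1, ε * r ∈ Icc (-δ) δ := fun r hr ↦
    ⟨by nlinarith [hr.1], by nlinarith [hr.2]⟩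
  have hd : |ε * t - ε * s| = ε * |t - s| := by rw [← mul_sub, abs_mul, abs_of_pos hε]
  have hd₀ : 0 < ε * |t - s| := mul_pos hε (abs_pos.2 (sub_ne_zero.2 hts))
  have hd₂ : |t - s| ≤ 2 := abs_sub_le_iff.2 ⟨by linarith [ht.2, hs.1], by linarith [ht.1, hs.2]⟩
  obtain ⟨hup, hlo⟩ := hK _ (hmem t ht) _ (hmem s hs)
  rw [hd] at hup hlo
  obtain ⟨hpos, hlog⟩ := Real.abs_log_div_le_of_sub_mul_sq_le hd₀ hM.le (by nlinarith) hup
    (by nlinarith)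
  have hbound : 2 * (M * (ε * |t - s|)) ≤ 4 * M * ε := by
    nlinarith [mul_pos hM hε]
  exact ⟨fun h ↦ by simp [h] at hpos, hlog.trans hbound⟩
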